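/- InfoNCE-type bound: let g(z,e) = p(z|e)/p(z) for strictly positive pmfs on finite sets, and let (E, Z) be jointly distributed with Z ~ p(·|E), together with |M| − 1 negative embeddings E* drawn independently with the same marginal as E. Then E[ log( g(Z,E) / (g(Z,E) + Σ_{k=1}^{|M|−1} g(Z,E*_k)) ) ] ≤ E[log g(Z,E)] − log |M| + log( E over the sample of (1 + (|M|−1)·(average of g(Z,E*)/g(Z,E))) ), and in particular using Jensen and E_{E*}[g(Z,E*)] ≤ 1/p(Z) bounds one obtains E[log(p(Z|E)/p(Z))] ≥ log |M| + E[ log( g(Z,E) / (g(Z,E) + Σ_k g(Z,E*_k)) ) ]. -/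

import Mathlib

/-!
Since `p(e) p(z|e) = p(z) p(e) g(z,e)`, the expectation of `1 / (g(Z,E) + Σₖ g(Z,E*ₖ))` is an
average over `z` of `E[G(X₀) / Σⱼ G(Xⱼ)]` for i.i.d. `X₀, …, X_{m-1} ~ p(e)` and `G = g(z, ·)`,
which is `1/m` by exchangeability. Jensen's inequality for `log` turns this into
`E[log(g(Z,E) + Σₖ g(Z,E*ₖ))] ≥ log m`, and both bounds follow by splitting the logarithm of the
quotient; in the first, the normalizer `E[1 + Σₖ g(Z,E*ₖ)/g(Z,E)]` is at least `1`.
-/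

open Finset

/-- Density ratio `g(z,e) = p(z|e)/p(z)`. -/
noncomputable def gratio {E Z : Type*} [Fintype E]
    (pE : E → ℝ) (pc : E → Z → ℝ) (z : Z) (e : E) : ℝ :=
  pc e z / (∑ e', pE e' * pc e' z)

section ProductWeights

variable {ι α : Type*} [Fintype ι] [DecidableEq ι] [Fintype α] {q : α → ℝ}

theorem sum_prod_eq_one (hq : ∑ a, q a = 1) : ∑ t : ι → α, ∏ j, q (t j) = 1 := by
  rw [← Fintype.prod_sum (fun _ => q)]
  simp [hq]

theorem sum_prod_mul_comp_perm (σ : Equiv.Perm ι) (F : (ι → α) → ℝ) :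
    ∑ t : ι → α, (∏ j, q (t j)) * F (t ∘ σ) = ∑ t : ι → α, (∏ j, q (t j)) * F t :=
  Fintype.sum_equiv (σ.symm.arrowCongr (Equiv.refl α)) _ _ fun t => by
    rw [← Equiv.prod_comp σ]
    rfl

theorem sum_prod_mul_div_sum (hq : ∑ a, q a = 1) {G : α → ℝ}
    (hG : ∀ a, 0 < G a) (i : ι) :
    ∑ t : ι → α, (∏ j, q (t j)) * (G (t i) / ∑ j, G (t j)) = 1 / Fintype.card ι := by
  have hshare : ∀ i', ∑ t : ι → α, (∏ j, q (t j)) * (G (t i') / ∑ j, G (t j))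
      = ∑ t : ι → α, (∏ j, q (t j)) * (G (t i) / ∑ j, G (t j)) := by
    intro i'
    rw [← sum_prod_mul_comp_perm (Equiv.swap i i')]
    refine sum_congr rfl fun t _ => ?_
    simp [Equiv.sum_comp (Equiv.swap i i') (fun j => G (t j))]
  have htotal : ∑ i', ∑ t : ι → α, (∏ j, q (t j)) * (G (t i') / ∑ j, G (t j)) = 1 := by
    rw [sum_comm, ← sum_prod_eq_one (ι := ι) hq]
    refine sum_congr rfl fun t _ => ?_
    have hpos : 0 < ∑ j, G (t j) := sum_pos (fun j _ => hG (t j)) ⟨i, mem_univ _⟩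
    rw [← mul_sum, ← sum_div, div_self hpos.ne', mul_one]
  simp only [hshare, sum_const, card_univ, nsmul_eq_mul] at htotal
  have : (Fintype.card ι : ℝ) ≠ 0 := by exact_mod_cast (Fintype.card_pos_iff.2 ⟨i⟩).ne'
  rw [eq_div_iff this, mul_comm]
  exact htotal

theorem sum_sum_mul_prod_mul_div_add_sum (hq : ∑ a, q a = 1) {G : α → ℝ}
    (hG : ∀ a, 0 < G a) (n : ℕ) :
    ∑ a, ∑ f : Fin n → α, q a * (∏ k, q (f k)) * (G a / (G a + ∑ k, G (f k)))
      = 1 / (n + 1) := by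
  have h := sum_prod_mul_div_sum hq hG (0 : Fin (n + 1))
  rw [Fintype.card_fin, Nat.cast_succ] at h
  rw [← h, ← Fintype.sum_equiv (Fin.consEquiv fun _ => α) _ _ fun _ => rfl,
    Fintype.sum_prod_type]
  simp [Fin.consEquiv, Fin.prod_univ_succ, Fin.sum_univ_succ]

end ProductWeights

theorem neg_log_sum_div_le_sum_mul_log {Ω : Type*} [Fintype Ω] {w X : Ω → ℝ}
    (hw : ∀ ω, 0 ≤ w ω) (hw1 : ∑ ω, w ω = 1) (hX : ∀ ω, 0 < X ω) :
    -Real.log (∑ ω, w ω / X ω) ≤ ∑ ω, w ω * Real.log (X ω) := by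
  have := strictConcaveOn_log_Ioi.concaveOn.le_map_sum (t := univ) (p := fun ω => (X ω)⁻¹)
    (fun ω _ => hw ω) hw1 (fun ω _ => Set.mem_Ioi.2 (inv_pos.2 (hX ω)))
  simp only [smul_eq_mul, Real.log_inv, mul_neg, sum_neg_distrib, ← div_eq_mul_inv] at this
  linarith

section InfoNCE

variable {E Z : Type*} [Fintype E] {pE : E → ℝ} {pc : E → Z → ℝ}

theorem gratio_pos [Nonempty E] (hpE : ∀ e, 0 < pE e) (hpc : ∀ e z, 0 < pc e z) (z : Z)
    (e : E) : 0 < gratio pE pc z e :=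
  div_pos (hpc e z) (sum_pos (fun e' _ => mul_pos (hpE e') (hpc e' z)) univ_nonempty)

variable [Fintype Z]

theorem sum_weight_eq_one (hpE1 : ∑ e, pE e = 1) (hpc1 : ∀ e, ∑ z, pc e z = 1) (n : ℕ) :
    ∑ e, ∑ z, ∑ f : Fin n → E, pE e * pc e z * ∏ k, pE (f k) = 1 := by
  simp only [← mul_sum, sum_prod_eq_one hpE1, mul_one, hpc1, hpE1]

theorem sum_weight_div_gratio_add_sum [Nonempty E] (hpE : ∀ e, 0 < pE e)
    (hpc : ∀ e z, 0 < pc e z)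
    (hpE1 : ∑ e, pE e = 1) (hpc1 : ∀ e, ∑ z, pc e z = 1) (n : ℕ) :
    ∑ e, ∑ z, ∑ f : Fin n → E, pE e * pc e z * (∏ k, pE (f k))
        / (gratio pE pc z e + ∑ k, gratio pE pc z (f k)) = 1 / (n + 1) := by
  set p : Z → ℝ := fun z => ∑ e', pE e' * pc e' z
  have hpc_eq : ∀ e z, pc e z = p z * gratio pE pc z e := fun e z =>
    (mul_div_cancel₀ _ (sum_pos (fun e' _ => mul_pos (hpE e') (hpc e' z)) univ_nonempty).ne').symm
  have hz : ∀ z, ∑ e, ∑ f : Fin n → E, pE e * pc e z * (∏ k, pE (f k))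
      / (gratio pE pc z e + ∑ k, gratio pE pc z (f k)) = p z * (1 / (n + 1)) := by
    intro z
    rw [← sum_sum_mul_prod_mul_div_add_sum hpE1 (gratio_pos hpE hpc z) n, mul_sum]
    refine sum_congr rfl fun e _ => ?_
    rw [mul_sum]
    refine sum_congr rfl fun f _ => ?_
    rw [hpc_eq e z]
    ring
  have hp1 : ∑ z, p z = 1 := by
    rw [sum_comm]
    simp only [← mul_sum, hpc1, mul_one, hpE1]
  rw [sum_comm, sum_congr rfl fun z _ => hz z, ← sum_mul, hp1, one_mul]

theorem log_succ_le_sum_weight_mul_log [Nonempty E] (hpE : ∀ e, 0 < pE e)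
    (hpc : ∀ e z, 0 < pc e z)
    (hpE1 : ∑ e, pE e = 1) (hpc1 : ∀ e, ∑ z, pc e z = 1) (n : ℕ) :
    Real.log (n + 1) ≤ ∑ e, ∑ z, ∑ f : Fin n → E, (pE e * pc e z * ∏ k, pE (f k)) *
      Real.log (gratio pE pc z e + ∑ k, gratio pE pc z (f k)) := by
  have hjensen := neg_log_sum_div_le_sum_mul_log
    (w := fun x : E × Z × (Fin n → E) => pE x.1 * pc x.1 x.2.1 * ∏ k, pE (x.2.2 k))
    (X := fun x => gratio pE pc x.2.1 x.1 + ∑ k, gratio pE pc x.2.1 (x.2.2 k))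
    (fun x => mul_nonneg (mul_nonneg (hpE _).le (hpc _ _).le) (prod_nonneg fun k _ => (hpE _).le))
    (by simpa only [Fintype.sum_prod_type] using sum_weight_eq_one hpE1 hpc1 n)
    (fun x => add_pos_of_pos_of_nonneg (gratio_pos hpE hpc _ _)
      (sum_nonneg fun k _ => (gratio_pos hpE hpc _ _).le))
  simp only [Fintype.sum_prod_type] at hjensen
  rwa [sum_weight_div_gratio_add_sum hpE hpc hpE1 hpc1, one_div, Real.log_inv, neg_neg] at hjensen

end InfoNCE

theorem infonce_bound_general {E Z : Type*} [Fintype E] [Fintype Z]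
    (pE : E → ℝ) (pc : E → Z → ℝ)
    (hpE : ∀ e, 0 < pE e) (hpc : ∀ e z, 0 < pc e z)
    (hpE1 : ∑ e, pE e = 1) (hpc1 : ∀ e, ∑ z, pc e z = 1)
    (m : ℕ) :
    ((∑ e, ∑ z, ∑ f : Fin (m - 1) → E, (pE e * pc e z * ∏ k, pE (f k)) *
        Real.log (gratio pE pc z e
          / (gratio pE pc z e + ∑ k, gratio pE pc z (f k))))
      ≤ (∑ e, ∑ z, ∑ f : Fin (m - 1) → E, (pE e * pc e z * ∏ k, pE (f k)) *
            Real.log (gratio pE pc z e))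
        - Real.log m
        + Real.log (∑ e, ∑ z, ∑ f : Fin (m - 1) → E,
            (pE e * pc e z * ∏ k, pE (f k)) *
              (1 + (∑ k, gratio pE pc z (f k)) / gratio pE pc z e)))
    ∧ (Real.log m
        + (∑ e, ∑ z, ∑ f : Fin (m - 1) → E, (pE e * pc e z * ∏ k, pE (f k)) *
            Real.log (gratio pE pc z e
              / (gratio pE pc z e + ∑ k, gratio pE pc z (f k))))
      ≤ ∑ e, ∑ z, pE e * pc e z *
          Real.log (pc e z / (∑ e', pE e' * pc e' z))) := by
  have : Nonempty E := univ_nonempty_iff.1 (nonempty_of_sum_ne_zero (hpE1.trans_ne one_ne_zero))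
  have hg z e : 0 < gratio pE pc z e := gratio_pos hpE hpc z e
  have hS z (f : Fin (m - 1) → E) : 0 ≤ ∑ k, gratio pE pc z (f k) :=
    sum_nonneg fun k _ => (hg z (f k)).le
  have hw e z (f : Fin (m - 1) → E) : 0 ≤ pE e * pc e z * ∏ k, pE (f k) :=
    mul_nonneg (mul_nonneg (hpE e).le (hpc e z).le) (prod_nonneg fun k _ => (hpE _).le)
  have hlog_div z e (f : Fin (m - 1) → E) :
      Real.log (gratio pE pc z e / (gratio pE pc z e + ∑ k, gratio pE pc z (f k)))
        = Real.log (gratio pE pc z e) - Real.log (gratio pE pc z e + ∑ k, gratio pE pc z (f k)) :=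
    Real.log_div (hg z e).ne' (add_pos_of_pos_of_nonneg (hg z e) (hS z f)).ne'
  -- at `m = 0` both sides are `0`, as `m - 1 = 0` in `ℕ` and `Real.log 0 = 0`
  have hm : Real.log m ≤ Real.log ((m - 1 : ℕ) + 1) := by rcases m with _ | m <;> simp
  have hcontrast := log_succ_le_sum_weight_mul_log hpE hpc hpE1 hpc1 (m - 1)
  have hnormalizer : 0 ≤ Real.log (∑ e, ∑ z, ∑ f : Fin (m - 1) → E,
      (pE e * pc e z * ∏ k, pE (f k)) * (1 + (∑ k, gratio pE pc z (f k)) / gratio pE pc z e)) := by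
    refine Real.log_nonneg ((sum_weight_eq_one hpE1 hpc1 (m - 1)).symm.trans_le ?_)
    refine sum_le_sum fun e _ => sum_le_sum fun z _ => sum_le_sum fun f _ => ?_
    exact le_mul_of_one_le_right (hw e z f)
      (le_add_of_nonneg_right (div_nonneg (hS z f) (hg z e).le))
  have hmarginal : ∑ e, ∑ z, ∑ f : Fin (m - 1) → E, (pE e * pc e z * ∏ k, pE (f k)) *
      Real.log (gratio pE pc z e)
        = ∑ e, ∑ z, pE e * pc e z * Real.log (pc e z / (∑ e', pE e' * pc e' z)) := by
    simp only [← sum_mul, ← mul_sum, sum_prod_eq_one hpE1, mul_one]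
    rfl
  simp only [hlog_div, mul_sub, sum_sub_distrib]
  constructor <;> linarith

/-- InfoNCE-type bound (Theorem 4.2): an upper bound on the contrastive objective, and the
resulting lower bound `E[log(p(Z|E)/p(Z))] ≥ log |M| + E[log (g/(g+Σ g*))]`. -/
theorem infonce_bound {E Z : Type*} [Fintype E] [Fintype Z]
    (pE : E → ℝ) (pc : E → Z → ℝ)
    (hpE : ∀ e, 0 < pE e) (hpc : ∀ e z, 0 < pc e z)
    (hpE1 : ∑ e, pE e = 1) (hpc1 : ∀ e, ∑ z, pc e z = 1)
    (m : ℕ) (hm : 1 ≤ m) :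
    ((∑ e, ∑ z, ∑ f : Fin (m - 1) → E, (pE e * pc e z * ∏ k, pE (f k)) *
        Real.log (gratio pE pc z e
          / (gratio pE pc z e + ∑ k, gratio pE pc z (f k))))
      ≤ (∑ e, ∑ z, ∑ f : Fin (m - 1) → E, (pE e * pc e z * ∏ k, pE (f k)) *
            Real.log (gratio pE pc z e))
        - Real.log m
        + Real.log (∑ e, ∑ z, ∑ f : Fin (m - 1) → E,
            (pE e * pc e z * ∏ k, pE (f k)) *
              (1 + (∑ k, gratio pE pc z (f k)) / gratio pE pc z e)))
    ∧ (Real.log m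
        + (∑ e, ∑ z, ∑ f : Fin (m - 1) → E, (pE e * pc e z * ∏ k, pE (f k)) *
            Real.log (gratio pE pc z e
              / (gratio pE pc z e + ∑ k, gratio pE pc z (f k))))
      ≤ ∑ e, ∑ z, pE e * pc e z *
          Real.log (pc e z / (∑ e', pE e' * pc e' z))) :=
  infonce_bound_general pE pc hpE hpc hpE1 hpc1 m
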